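/- For any simple graph G, a proper edge coloring of G using at most Δ(G)+1 colors exists, where Δ(G) is the maximum vertex degree. -/

import Mathlib

/-!
Colour the edges one at a time with colours `< Δ + 1`, so that every vertex always misses some
colour; fix such a missing colour `fr v` for each vertex `v`. To colour a new edge `x y₀`, grow a
fan `y₀, y₁, …, y_k` of neighbours of `x` in which `x y_{i+1}` is coloured `fr y_i`. Shifting the
colours down the fan up to `y_j` (`x y_i` takes the colour of `x y_{i+1}`) gives a proper
colouring in which `x y_j` is uncoloured instead of `x y₀`.

If `b = fr y_k` is missing at `x`, shift the whole fan and colour `x y_k` with `b`. Otherwise `b`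
is on an edge `x z`; either `z` extends the fan, or `z = y_{i+1}` and `fr y_i = b`. In the latter
case let `a = fr x`. In the subgraph of `a`/`b`-coloured edges all degrees are at most `2`, and
`x`, `y_i`, `y_k` have degree at most `1`, so they are not all in one component. If `y_i` is not in
the component of `x`, shift up to `y_i`. Otherwise `y_k` is not in the component of `x` and `y_i`;
shift the whole fan: `x y_i` is now the only `a`/`b`-edge at `x`, so `y_k` is still not in the
component of `x`. In both cases swap `a` and `b` on the component of `x` and colour the
uncoloured edge with `b`.
-/

open Finset

namespace SimpleGraph

variable {V : Type*} {G : SimpleGraph V}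

lemma Connected.card_filter_degree_le_one_le_two [Fintype V] [DecidableRel G.Adj]
    (hG : G.Connected) (hdeg : ∀ v, G.degree v ≤ 2) : #{v | G.degree v ≤ 1} ≤ 2 := by
  -- `2 |E| = ∑ deg ≤ 2 |V| - #{deg ≤ 1}`, while connectivity gives `|V| ≤ |E| + 1`
  have hcard : Fintype.card V ≤ #G.edgeFinset + 1 := by
    simpa only [Nat.card_eq_fintype_card, edgeFinset_card] using
      hG.card_vert_le_card_edgeSet_add_one
  have hsum : ∑ v, (G.degree v + if G.degree v ≤ 1 then 1 else 0) ≤ ∑ _v : V, 2 :=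
    sum_le_sum fun v _ => by have := hdeg v; split_ifs <;> omega
  rw [sum_add_distrib, sum_degrees_eq_twice_card_edges, sum_boole, sum_const, card_univ,
    smul_eq_mul] at hsum
  push_cast at hsum
  omega

lemma Reachable.not_reachable_of_degree_le_one [Fintype V] [DecidableRel G.Adj]
    (hdeg : ∀ v, G.degree v ≤ 2) {x u v : V} (hx : G.degree x ≤ 1) (hu : G.degree u ≤ 1)
    (hv : G.degree v ≤ 1) (hxu : x ≠ u) (hxv : x ≠ v) (huv : u ≠ v) (h : G.Reachable x u) :
    ¬ G.Reachable x v := by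
  classical
  intro h'
  let C := G.connectedComponentMk x
  have hdegC : ∀ w (hw : w ∈ C.supp), (G.induce C.supp).degree ⟨w, hw⟩ = G.degree w :=
    fun w hw => degree_induce_of_neighborSet_subset fun _ hadj => C.mem_supp_of_adj_mem_supp hw hadj
  have hxC : x ∈ C.supp := rfl
  have huC : u ∈ C.supp := (ConnectedComponent.sound h).symm
  have hvC : v ∈ C.supp := (ConnectedComponent.sound h').symm
  have hsub : {⟨x, hxC⟩, ⟨u, huC⟩, ⟨v, hvC⟩} ⊆
      univ.filter fun w => (G.induce C.supp).degree w ≤ 1 := by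
    intro w hw
    simp only [mem_insert, mem_singleton] at hw
    simp only [mem_filter, mem_univ, true_and]
    rcases hw with rfl | rfl | rfl <;> rwa [hdegC]
  have hC : (G.induce C.supp).Connected := C.connected_toSimpleGraph
  have := (card_le_card hsub).trans <| hC.card_filter_degree_le_one_le_two
    fun w => (hdegC w w.2).trans_le (hdeg w)
  rw [card_insert_of_notMem (by simp [hxu, hxv]), card_insert_of_notMem (by simp [huv]),
    card_singleton] at this
  omega

lemma Reachable.reachable_of_forall_adj_eq {K H : SimpleGraph V} {x y u : V}
    (hr : K.Reachable x u) (hu : u ≠ x) (hx : ∀ w, K.Adj x w → w = y)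
    (hKH : ∀ p q, K.Adj p q → p ≠ x → q ≠ x → H.Adj p q) : H.Reachable y u := by
  classical
  obtain ⟨p, hp⟩ := hr.some.toPath
  cases p with
  | nil => exact absurd rfl hu
  | cons h q =>
    obtain rfl := hx _ h
    have hxq := (Walk.cons_isPath_iff _ _).1 hp |>.2
    refine ⟨q.transfer H fun e he => ?_⟩
    induction e with
    | _ p₁ q₁ =>
      exact hKH p₁ q₁ (q.edges_subset_edgeSet he)
        (fun h => hxq (h ▸ q.fst_mem_support_of_mem_edges he))
        (fun h => hxq (h ▸ q.snd_mem_support_of_mem_edges he))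

end SimpleGraph

namespace Vizing

open SimpleGraph

variable {V : Type*}

def IsProperOn (s : Finset (Sym2 V)) (c : Sym2 V → ℕ) : Prop :=
  ∀ ⦃e⦄, e ∈ s → ∀ ⦃e'⦄, e' ∈ s → e ≠ e' → (∃ v, v ∈ e ∧ v ∈ e') → c e ≠ c e'

def Missing (s : Finset (Sym2 V)) (c : Sym2 V → ℕ) (v : V) (t : ℕ) : Prop :=
  ∀ e ∈ s, v ∈ e → c e ≠ t

def IsEdgeColorable (s : Finset (Sym2 V)) (N : ℕ) : Prop :=
  ∃ c : Sym2 V → ℕ, IsProperOn s c ∧ ∀ e ∈ s, c e < N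

variable {s : Finset (Sym2 V)} {c : Sym2 V → ℕ}

lemma exists_missing_lt_maxDegree_succ [Fintype V] [DecidableEq V] (G : SimpleGraph V)
    [DecidableRel G.Adj] (hs : s ⊆ G.edgeFinset) (c : Sym2 V → ℕ) (v : V) :
    ∃ t < G.maxDegree + 1, Missing s c v t := by
  have hused : #((s.filter (v ∈ ·)).image c) < #(range (G.maxDegree + 1)) := calc
    #((s.filter (v ∈ ·)).image c) ≤ #(s.filter (v ∈ ·)) := card_image_le
    _ ≤ #(G.incidenceFinset v) := card_le_card fun e he => by
      rw [mem_filter] at he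
      exact (G.mem_incidenceFinset v e).2 ⟨G.mem_edgeFinset.1 (hs he.1), he.2⟩
    _ = G.degree v := G.card_incidenceFinset_eq_degree v
    _ < #(range (G.maxDegree + 1)) := by
      rw [card_range]; exact Nat.lt_succ_of_le (G.degree_le_maxDegree v)
  obtain ⟨t, ht, htc⟩ := exists_mem_notMem_of_card_lt_card hused
  exact ⟨t, mem_range.1 ht, fun e he hv hct => htc (mem_image.2 ⟨e, mem_filter.2 ⟨he, hv⟩, hct⟩)⟩

lemma IsProperOn.insert [DecidableEq V] (hp : IsProperOn s c) {e₀ : Sym2 V} {t : ℕ}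
    (he₀ : e₀ ∉ s) (ht : ∀ v ∈ e₀, Missing s c v t) :
    IsProperOn (insert e₀ s) (Function.update c e₀ t) := by
  have hne : ∀ e ∈ s, e ≠ e₀ := fun e he h => he₀ (h ▸ he)
  intro e he e' he' hee' ⟨v, hv, hv'⟩
  rw [mem_insert] at he he'
  rcases he with rfl | he <;> rcases he' with rfl | he'
  · exact absurd rfl hee'
  · rw [Function.update_self, Function.update_of_ne (hne e' he')]
    exact (ht v hv e' he' hv').symm
  · rw [Function.update_self, Function.update_of_ne (hne e he)]
    exact ht v hv' e he hv
  · rw [Function.update_of_ne (hne e he), Function.update_of_ne (hne e' he')]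
    exact hp he he' hee' ⟨v, hv, hv'⟩

lemma isEdgeColorable_of_erase [DecidableEq V] {S : Finset (Sym2 V)} {e₀ : Sym2 V} {t N : ℕ}
    (he₀ : e₀ ∈ S) (hp : IsProperOn (S.erase e₀) c) (hc : ∀ e ∈ S.erase e₀, c e < N)
    (ht : ∀ v ∈ e₀, Missing (S.erase e₀) c v t) (htN : t < N) : IsEdgeColorable S N := by
  refine ⟨Function.update c e₀ t, insert_erase he₀ ▸ hp.insert (notMem_erase e₀ S) ht,
    fun e he => ?_⟩
  rcases eq_or_ne e e₀ with rfl | hne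
  · rwa [Function.update_self]
  · rw [Function.update_of_ne hne]
    exact hc e (mem_erase.2 ⟨hne, he⟩)

def kempeGraph (s : Finset (Sym2 V)) (c : Sym2 V → ℕ) (a b : ℕ) : SimpleGraph V where
  Adj u v := u ≠ v ∧ s(u, v) ∈ s ∧ (c s(u, v) = a ∨ c s(u, v) = b)
  symm := ⟨fun _ _ h => ⟨h.1.symm, Sym2.eq_swap ▸ h.2⟩⟩
  loopless := ⟨fun _ h => h.1 rfl⟩

lemma kempeGraph_adj {a b : ℕ} {u v : V} :
    (kempeGraph s c a b).Adj u v ↔ u ≠ v ∧ s(u, v) ∈ s ∧ (c s(u, v) = a ∨ c s(u, v) = b) :=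
  Iff.rfl

instance [DecidableEq V] {a b : ℕ} : DecidableRel (kempeGraph s c a b).Adj := fun _ _ =>
  decidable_of_iff' _ kempeGraph_adj

lemma IsProperOn.degree_kempeGraph_le [Fintype V] [DecidableEq V] (hp : IsProperOn s c)
    {a b : ℕ} (v : V) (T : Finset ℕ) (hT : ∀ u, (kempeGraph s c a b).Adj v u → c s(v, u) ∈ T) :
    (kempeGraph s c a b).degree v ≤ #T := by
  rw [← card_neighborFinset_eq_degree]
  refine card_le_card_of_injOn (fun u => c s(v, u))
    (fun u hu => hT u ((mem_neighborFinset ..).1 hu)) fun u hu u' hu' huu' => ?_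
  simp only [coe_neighborFinset, mem_neighborSet, kempeGraph_adj] at hu hu'
  by_contra hne
  exact hp hu.2.1 hu'.2.1 (fun h => hne (Sym2.congr_right.1 h)) ⟨v, by simp, by simp⟩ huu'

lemma IsProperOn.degree_kempeGraph_le_two [Fintype V] [DecidableEq V] (hp : IsProperOn s c)
    (a b : ℕ) (v : V) : (kempeGraph s c a b).degree v ≤ 2 :=
  (hp.degree_kempeGraph_le v {a, b} fun _ h => by simpa using h.2.2).trans card_le_two

lemma IsProperOn.degree_kempeGraph_le_one [Fintype V] [DecidableEq V] (hp : IsProperOn s c)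
    {a b : ℕ} {v : V} (h : Missing s c v a ∨ Missing s c v b) :
    (kempeGraph s c a b).degree v ≤ 1 := by
  rcases h with h | h
  · refine (hp.degree_kempeGraph_le v {b} fun _ hu => mem_singleton.2 ?_).trans
      (card_singleton b).le
    exact hu.2.2.resolve_left (h _ hu.2.1 (Sym2.mem_mk_left _ _))
  · refine (hp.degree_kempeGraph_le v {a} fun _ hu => mem_singleton.2 ?_).trans
      (card_singleton a).le
    exact hu.2.2.resolve_right (h _ hu.2.1 (Sym2.mem_mk_left _ _))

open Classical in
noncomputable def kempeSwap (s : Finset (Sym2 V)) (c : Sym2 V → ℕ) (a b : ℕ) (x : V) :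
    Sym2 V → ℕ :=
  fun e => if ∃ v ∈ e, (kempeGraph s c a b).Reachable x v then Equiv.swap a b (c e) else c e

lemma kempeSwap_eq_of_reachable {a b : ℕ} {x v : V} {e : Sym2 V} (hv : v ∈ e)
    (hxv : (kempeGraph s c a b).Reachable x v) :
    kempeSwap s c a b x e = Equiv.swap a b (c e) :=
  if_pos ⟨v, hv, hxv⟩

lemma kempeSwap_eq_of_not_reachable {a b : ℕ} {x v : V} {e : Sym2 V} (he : e ∈ s) (hv : v ∈ e)
    (hxv : ¬ (kempeGraph s c a b).Reachable x v) : kempeSwap s c a b x e = c e := by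
  unfold kempeSwap
  split_ifs with hswap
  · obtain ⟨w, hw, hxw⟩ := hswap
    -- an `a`/`b`-coloured edge from the chain to `v` would put `v` on the chain
    have hchain : c e = a ∨ c e = b → (kempeGraph s c a b).Reachable x v := by
      intro hab
      rcases eq_or_ne w v with rfl | hwv
      · exact hxw
      · obtain rfl := (Sym2.mem_and_mem_iff hwv).1 ⟨hw, hv⟩
        exact hxw.trans (Adj.reachable ⟨hwv, he, hab⟩)
    exact Equiv.swap_apply_of_ne_of_ne (fun h => hxv (hchain (.inl h)))
      (fun h => hxv (hchain (.inr h)))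
  · rfl

lemma IsProperOn.kempeSwap (hp : IsProperOn s c) (a b : ℕ) (x : V) :
    IsProperOn s (kempeSwap s c a b x) := by
  intro e he e' he' hee' ⟨v, hv, hv'⟩
  have hne := hp he he' hee' ⟨v, hv, hv'⟩
  by_cases hxv : (kempeGraph s c a b).Reachable x v
  · rw [kempeSwap_eq_of_reachable hv hxv, kempeSwap_eq_of_reachable hv' hxv]
    exact (Equiv.swap a b).injective.ne hne
  · rwa [kempeSwap_eq_of_not_reachable he hv hxv, kempeSwap_eq_of_not_reachable he' hv' hxv]

lemma missing_kempeSwap_iff {a b t : ℕ} {x v : V} (hv : ¬ (kempeGraph s c a b).Reachable x v) :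
    Missing s (kempeSwap s c a b x) v t ↔ Missing s c v t := by
  refine forall₂_congr fun e he => imp_congr_right fun hve => ?_
  rw [kempeSwap_eq_of_not_reachable he hve hv]

lemma Missing.kempeSwap {a b : ℕ} {x : V} (ha : Missing s c x a) :
    Missing s (kempeSwap s c a b x) x b := by
  intro e he hxe
  rw [kempeSwap_eq_of_reachable hxe (Reachable.refl x), Ne, Equiv.swap_apply_eq_iff,
    Equiv.swap_apply_right]
  exact ha e he hxe

lemma kempeSwap_lt {N a b : ℕ} (ha : a < N) (hb : b < N) (x : V) {e : Sym2 V} (he : c e < N) :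
    kempeSwap s c a b x e < N := by
  unfold kempeSwap
  split_ifs
  · rw [Equiv.swap_apply_def]; split_ifs <;> assumption
  · exact he

section Fan

variable {fr : V → ℕ} {x : V} {ys : ℕ → V} {k : ℕ}

structure IsFan (s : Finset (Sym2 V)) (c : Sym2 V → ℕ) (fr : V → ℕ) (x : V) (ys : ℕ → V)
    (k : ℕ) : Prop where
  proper : IsProperOn s c
  missing : ∀ v, Missing s c v (fr v)
  injOn : ∀ i ≤ k, ∀ j ≤ k, ys i = ys j → i = j
  ne_center : ∀ i ≤ k, ys i ≠ x
  not_mem_zero : s(x, ys 0) ∉ s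
  mem : ∀ i, 0 < i → i ≤ k → s(x, ys i) ∈ s
  color_succ : ∀ i < k, c s(x, ys (i + 1)) = fr (ys i)

namespace IsFan

lemma edge_ne (F : IsFan s c fr x ys k) {i j : ℕ} (hi : i ≤ k) (hj : j ≤ k) (hij : i ≠ j) :
    s(x, ys i) ≠ s(x, ys j) :=
  fun h => hij (F.injOn i hi j hj (Sym2.congr_right.1 h))

lemma ys_ne_of_lt (F : IsFan s c fr x ys k) {i j : ℕ} (hj : j ≤ k) (hi : i < j) : ys i ≠ ys j :=
  fun h => hi.ne (F.injOn i (by omega) j hj h)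

lemma lt_card [Fintype V] (F : IsFan s c fr x ys k) : k < Fintype.card V := by
  have := card_le_card_of_injOn ys (s := range (k + 1)) (fun _ _ => mem_univ _)
    fun i hi j hj h => F.injOn i (Nat.lt_succ_iff.1 (mem_range.1 hi)) j
      (Nat.lt_succ_iff.1 (mem_range.1 hj)) h
  simpa using this

lemma snoc (F : IsFan s c fr x ys k) {z : V} (hz : s(x, z) ∈ s) (hzx : z ≠ x)
    (hcz : c s(x, z) = fr (ys k)) (hnew : ∀ i ≤ k, ys i ≠ z) :
    IsFan s c fr x (Function.update ys (k + 1) z) (k + 1) where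
  proper := F.proper
  missing := F.missing
  injOn i hi j hj := by
    simp only [Function.update_apply]
    split_ifs with h₁ h₂ h₂
    · omega
    · exact fun h => absurd h.symm (hnew j (by omega))
    · exact fun h => absurd h (hnew i (by omega))
    · exact F.injOn i (by omega) j (by omega)
  ne_center i hi := by
    simp only [Function.update_apply]
    split_ifs
    exacts [hzx, F.ne_center i (by omega)]
  not_mem_zero := by simpa using F.not_mem_zero
  mem i hi₀ hi := by
    simp only [Function.update_apply]
    split_ifs
    exacts [hz, F.mem i hi₀ (by omega)]
  color_succ i hi := by
    simp only [Function.update_apply]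
    split_ifs with h₁ h₂ h₂
    · omega
    · obtain rfl : i = k := by omega
      exact hcz
    · omega
    · exact F.color_succ i (by omega)

lemma fr_ne (F : IsFan s c fr x ys k) {i j : ℕ} (hi : i < k) (hj : j < k) (hij : i ≠ j) :
    fr (ys i) ≠ fr (ys j) := by
  rw [← F.color_succ i hi, ← F.color_succ j hj]
  exact F.proper (F.mem _ i.succ_pos hi) (F.mem _ j.succ_pos hj)
    (F.edge_ne hi hj (by omega)) ⟨x, Sym2.mem_mk_left _ _, Sym2.mem_mk_left _ _⟩

lemma not_missing_center (F : IsFan s c fr x ys k) {i : ℕ} (hi : i < k) :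
    ¬ Missing s c x (fr (ys i)) :=
  fun h => h _ (F.mem _ i.succ_pos hi) (Sym2.mem_mk_left _ _) (F.color_succ i hi)

end IsFan

def rotate [DecidableEq V] (c : Sym2 V → ℕ) (x : V) (ys : ℕ → V) : ℕ → Sym2 V → ℕ
  | 0 => c
  | j + 1 => Function.update (rotate c x ys j) s(x, ys j) (c s(x, ys (j + 1)))

def rotateEdges [DecidableEq V] (s : Finset (Sym2 V)) (x : V) (ys : ℕ → V) (j : ℕ) :
    Finset (Sym2 V) :=
  (insert s(x, ys 0) s).erase s(x, ys j)

variable [DecidableEq V]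

lemma rotate_of_forall_ne {j : ℕ} {e : Sym2 V} (h : ∀ i < j, e ≠ s(x, ys i)) :
    rotate c x ys j e = c e := by
  induction j with
  | zero => rfl
  | succ j ih =>
    rw [rotate, Function.update_of_ne (h j j.lt_succ_self), ih fun i hi => h i (by omega)]

lemma mem_rotateEdges {j : ℕ} {e : Sym2 V} :
    e ∈ rotateEdges s x ys j ↔ e ≠ s(x, ys j) ∧ (e = s(x, ys 0) ∨ e ∈ s) := by
  rw [rotateEdges, mem_erase, mem_insert]

lemma mem_of_mem_rotateEdges {j : ℕ} {e : Sym2 V} (he : e ∈ rotateEdges s x ys j)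
    (h : ∀ i < j, e ≠ s(x, ys i)) : e ∈ s := by
  obtain ⟨hej, rfl | he⟩ := mem_rotateEdges.1 he
  · rcases Nat.eq_zero_or_pos j with rfl | hj
    · exact absurd rfl hej
    · exact absurd rfl (h 0 hj)
  · exact he

lemma missing_rotate {j t : ℕ} {v : V} (hvx : v ≠ x) (hv : ∀ i < j, ys i ≠ v)
    (h : Missing s c v t) : Missing (rotateEdges s x ys j) (rotate c x ys j) v t := by
  intro e he hve
  have hne : ∀ i < j, e ≠ s(x, ys i) := by
    rintro i hi rfl
    rcases Sym2.mem_iff.1 hve with rfl | rfl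
    exacts [hvx rfl, hv i hi rfl]
  rw [rotate_of_forall_ne hne]
  exact h e (mem_of_mem_rotateEdges he hne) hve

namespace IsFan

lemma rotate_of_lt (F : IsFan s c fr x ys k) {i j : ℕ} (hj : j ≤ k) (hi : i < j) :
    rotate c x ys j s(x, ys i) = fr (ys i) := by
  induction j with
  | zero => omega
  | succ j ih =>
    rw [rotate]
    rcases Nat.lt_succ_iff_lt_or_eq.1 hi with hi | rfl
    · rw [Function.update_of_ne (F.edge_ne (by omega) (by omega) hi.ne), ih (by omega) hi]
    · rw [Function.update_self, F.color_succ i (by omega)]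

lemma mem_rotateEdges_of_lt (F : IsFan s c fr x ys k) {i j : ℕ} (hj : j ≤ k) (hi : i < j) :
    s(x, ys i) ∈ rotateEdges s x ys j := by
  refine mem_rotateEdges.2 ⟨F.edge_ne (by omega) hj hi.ne, ?_⟩
  rcases Nat.eq_zero_or_pos i with rfl | hi₀
  exacts [.inl rfl, .inr (F.mem i hi₀ (by omega))]

lemma rotate_lt (F : IsFan s c fr x ys k) {j N : ℕ} (hj : j ≤ k) (hc : ∀ e ∈ s, c e < N)
    (hfrN : ∀ v, fr v < N) {e : Sym2 V} (he : e ∈ rotateEdges s x ys j) :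
    rotate c x ys j e < N := by
  by_cases hrot : ∃ i < j, e = s(x, ys i)
  · obtain ⟨i, hi, rfl⟩ := hrot
    exact F.rotate_of_lt hj hi ▸ hfrN _
  · push Not at hrot
    exact rotate_of_forall_ne hrot ▸ hc e (mem_of_mem_rotateEdges he hrot)

lemma mem_insert_zero (F : IsFan s c fr x ys k) {j : ℕ} (hj : j ≤ k) :
    s(x, ys j) ∈ insert s(x, ys 0) s := by
  rcases Nat.eq_zero_or_pos j with rfl | hj₀
  exacts [mem_insert_self _ _, mem_insert_of_mem (F.mem j hj₀ hj)]

lemma rotate_ne_of_lt (F : IsFan s c fr x ys k) {i j : ℕ} (hj : j ≤ k) (hi : i < j)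
    {e : Sym2 V} (he : e ∈ rotateEdges s x ys j) (hne : ∀ l < j, e ≠ s(x, ys l)) {v : V}
    (hv : v ∈ s(x, ys i)) (hve : v ∈ e) : rotate c x ys j s(x, ys i) ≠ rotate c x ys j e := by
  have hes := mem_of_mem_rotateEdges he hne
  rw [F.rotate_of_lt hj hi, rotate_of_forall_ne hne]
  rcases Sym2.mem_iff.1 hv with rfl | rfl
  · have hei : e ≠ s(v, ys (i + 1)) := by
      rcases (show i + 1 < j ∨ i + 1 = j by omega) with h | rfl
      exacts [hne _ h, (mem_rotateEdges.1 he).1]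
    rw [← F.color_succ i (by omega)]
    exact F.proper (F.mem _ i.succ_pos (by omega)) hes hei.symm ⟨v, Sym2.mem_mk_left _ _, hve⟩
  · exact fun h => F.missing _ e hes hve h.symm

lemma rotate_proper (F : IsFan s c fr x ys k) {j : ℕ} (hj : j ≤ k) :
    IsProperOn (rotateEdges s x ys j) (rotate c x ys j) := by
  intro e he e' he' hee' ⟨v, hv, hv'⟩
  by_cases h : ∃ i < j, e = s(x, ys i) <;> by_cases h' : ∃ i < j, e' = s(x, ys i)
  · obtain ⟨i, hi, rfl⟩ := h
    obtain ⟨i', hi', rfl⟩ := h'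
    rw [F.rotate_of_lt hj hi, F.rotate_of_lt hj hi']
    exact F.fr_ne (by omega) (by omega) fun h => hee' (h ▸ rfl)
  · obtain ⟨i, hi, rfl⟩ := h
    push Not at h'
    exact F.rotate_ne_of_lt hj hi he' h' hv hv'
  · obtain ⟨i, hi, rfl⟩ := h'
    push Not at h
    exact (F.rotate_ne_of_lt hj hi he h hv' hv).symm
  · push Not at h h'
    rw [rotate_of_forall_ne h, rotate_of_forall_ne h']
    exact F.proper (mem_of_mem_rotateEdges he h) (mem_of_mem_rotateEdges he' h') hee'
      ⟨v, hv, hv'⟩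

lemma missing_rotate_center (F : IsFan s c fr x ys k) {j t : ℕ} (hj : j ≤ k)
    (ht : Missing s c x t) : Missing (rotateEdges s x ys j) (rotate c x ys j) x t := by
  intro e he hxe hrot
  by_cases h : ∃ i < j, e = s(x, ys i)
  · obtain ⟨i, hi, rfl⟩ := h
    rw [F.rotate_of_lt hj hi] at hrot
    exact F.not_missing_center (by omega) (hrot ▸ ht)
  · push Not at h
    rw [rotate_of_forall_ne h] at hrot
    exact ht e (mem_of_mem_rotateEdges he h) hxe hrot

lemma isEdgeColorable_of_missing (F : IsFan s c fr x ys k) {N : ℕ} (hc : ∀ e ∈ s, c e < N)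
    (hfrN : ∀ v, fr v < N) (h : Missing s c x (fr (ys k))) :
    IsEdgeColorable (insert s(x, ys 0) s) N :=
  isEdgeColorable_of_erase (F.mem_insert_zero le_rfl) (F.rotate_proper le_rfl)
    (fun _ he => F.rotate_lt le_rfl hc hfrN he)
    (Sym2.forall_mem_pair.2 ⟨F.missing_rotate_center le_rfl h,
      missing_rotate (F.ne_center k le_rfl) (fun _ hi => F.ys_ne_of_lt le_rfl hi) (F.missing _)⟩)
    (hfrN _)

lemma isEdgeColorable_of_not_reachable (F : IsFan s c fr x ys k) {j N : ℕ} (hj : j ≤ k)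
    (hc : ∀ e ∈ s, c e < N) (hfrN : ∀ v, fr v < N)
    (h : ¬ (kempeGraph (rotateEdges s x ys j) (rotate c x ys j) (fr x) (fr (ys j))).Reachable
      x (ys j)) :
    IsEdgeColorable (insert s(x, ys 0) s) N :=
  isEdgeColorable_of_erase (F.mem_insert_zero hj) ((F.rotate_proper hj).kempeSwap _ _ x)
    (fun _ he => kempeSwap_lt (hfrN _) (hfrN _) x (F.rotate_lt hj hc hfrN he))
    (Sym2.forall_mem_pair.2 ⟨(F.missing_rotate_center hj (F.missing x)).kempeSwap,
      (missing_kempeSwap_iff h).2 <|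
        missing_rotate (F.ne_center j hj) (fun _ hi => F.ys_ne_of_lt hj hi) (F.missing _)⟩)
    (hfrN _)

lemma isEdgeColorable_of_not_reachable_of_lt (F : IsFan s c fr x ys k) {i N : ℕ} (hi : i < k)
    (hc : ∀ e ∈ s, c e < N) (hfrN : ∀ v, fr v < N)
    (h : ¬ (kempeGraph s c (fr x) (fr (ys i))).Reachable x (ys i)) :
    IsEdgeColorable (insert s(x, ys 0) s) N := by
  refine F.isEdgeColorable_of_not_reachable hi.le hc hfrN fun hr => h (hr.mono ?_)
  rintro u w ⟨huw, hmem, hcol⟩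
  by_cases hrot : ∃ l < i, s(u, w) = s(x, ys l)
  · -- the rotated edges carry colours other than `fr x` and `fr (ys i)`
    obtain ⟨l, hl, heq⟩ := hrot
    rw [heq, F.rotate_of_lt hi.le hl] at hcol
    rcases hcol with hcol | hcol
    · exact absurd (hcol ▸ F.missing x) (F.not_missing_center (by omega))
    · exact absurd hcol (F.fr_ne (by omega) hi hl.ne)
  · push Not at hrot
    rw [rotate_of_forall_ne hrot] at hcol
    exact ⟨huw, mem_of_mem_rotateEdges hmem hrot, hcol⟩

lemma isEdgeColorable_of_not_reachable_last (F : IsFan s c fr x ys k) {i N : ℕ} (hi : i < k)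
    (hc : ∀ e ∈ s, c e < N) (hfrN : ∀ v, fr v < N) (hb : fr (ys i) = fr (ys k))
    (h : ¬ (kempeGraph s c (fr x) (fr (ys k))).Reachable (ys i) (ys k)) :
    IsEdgeColorable (insert s(x, ys 0) s) N := by
  have hp := F.rotate_proper le_rfl
  refine F.isEdgeColorable_of_not_reachable le_rfl hc hfrN fun hr => h ?_
  -- after the full rotation `x y_i` is the only `fr x`/`fr (ys k)` edge at `x`, and nothing
  -- away from `x` has changed
  refine hr.reachable_of_forall_adj_eq (F.ne_center k le_rfl) ?_ ?_
  · rintro w ⟨hxw, hmem, hcol⟩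
    have hcb := hcol.resolve_left (F.missing_rotate_center le_rfl (F.missing x) _ hmem
      (Sym2.mem_mk_left _ _))
    by_contra hw
    refine hp hmem (F.mem_rotateEdges_of_lt le_rfl hi) (fun h => hw (Sym2.congr_right.1 h))
      ⟨x, Sym2.mem_mk_left _ _, Sym2.mem_mk_left _ _⟩ ?_
    rw [hcb, F.rotate_of_lt le_rfl hi, hb]
  · rintro p q ⟨hpq, hmem, hcol⟩ hpx hqx
    have hrot : ∀ l < k, s(p, q) ≠ s(x, ys l) := fun l _ h =>
      (Sym2.mem_iff.1 (h ▸ Sym2.mem_mk_left x (ys l))).elim (hpx ·.symm) (hqx ·.symm)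
    rw [rotate_of_forall_ne hrot] at hcol
    exact ⟨hpq, mem_of_mem_rotateEdges hmem hrot, hcol⟩

lemma isEdgeColorable_of_fr_eq [Fintype V] (F : IsFan s c fr x ys k) {i N : ℕ} (hi : i < k)
    (hc : ∀ e ∈ s, c e < N) (hfrN : ∀ v, fr v < N) (hb : fr (ys i) = fr (ys k)) :
    IsEdgeColorable (insert s(x, ys 0) s) N := by
  by_cases hxi : (kempeGraph s c (fr x) (fr (ys k))).Reachable x (ys i)
  · refine F.isEdgeColorable_of_not_reachable_last hi hc hfrN hb fun hik => ?_
    exact hxi.not_reachable_of_degree_le_one (F.proper.degree_kempeGraph_le_two _ _)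
      (F.proper.degree_kempeGraph_le_one (.inl (F.missing x)))
      (F.proper.degree_kempeGraph_le_one (.inr (hb ▸ F.missing (ys i))))
      (F.proper.degree_kempeGraph_le_one (.inr (F.missing (ys k))))
      (F.ne_center i hi.le).symm (F.ne_center k le_rfl).symm (F.ys_ne_of_lt le_rfl hi)
      (hxi.trans hik)
  · exact F.isEdgeColorable_of_not_reachable_of_lt hi hc hfrN (hb ▸ hxi)

theorem isEdgeColorable [Fintype V] {ys : ℕ → V} {k : ℕ} (F : IsFan s c fr x ys k)
    (hs : ∀ e ∈ s, ¬ e.IsDiag) {N : ℕ} (hc : ∀ e ∈ s, c e < N) (hfrN : ∀ v, fr v < N) :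
    IsEdgeColorable (insert s(x, ys 0) s) N := by
  by_cases hk : Missing s c x (fr (ys k))
  · exact F.isEdgeColorable_of_missing hc hfrN hk
  obtain ⟨e, he, hxe, hce⟩ : ∃ e ∈ s, x ∈ e ∧ c e = fr (ys k) := by
    simpa [Missing] using hk
  obtain ⟨z, rfl⟩ := Sym2.mem_iff_exists.1 hxe
  by_cases hz : ∃ j ≤ k, ys j = z
  · obtain ⟨j, hj, rfl⟩ := hz
    obtain ⟨i, rfl⟩ : ∃ i, j = i + 1 :=
      Nat.exists_eq_succ_of_ne_zero fun h => F.not_mem_zero (h ▸ he)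
    exact F.isEdgeColorable_of_fr_eq (by omega) hc hfrN (F.color_succ i (by omega) ▸ hce)
  · push Not at hz
    have hzx : z ≠ x := fun h => hs _ he (Sym2.mk_isDiag_iff.2 h.symm)
    have := F.lt_card
    simpa using (F.snoc he hzx hce hz).isEdgeColorable hs hc hfrN
termination_by Fintype.card V - k

end IsFan

end Fan

lemma isEdgeColorable_insert [Fintype V] [DecidableEq V] (G : SimpleGraph V)
    [DecidableRel G.Adj] {s : Finset (Sym2 V)} (hs : s ⊆ G.edgeFinset)
    (hcol : IsEdgeColorable s (G.maxDegree + 1))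
    {e : Sym2 V} (he : e ∈ G.edgeFinset) (hes : e ∉ s) :
    IsEdgeColorable (insert e s) (G.maxDegree + 1) := by
  obtain ⟨c, hp, hc⟩ := hcol
  choose fr hfrN hfr using exists_missing_lt_maxDegree_succ G hs c
  induction e with
  | _ x y =>
    have hxy : y ≠ x := fun h => G.not_isDiag_of_mem_edgeSet (G.mem_edgeFinset.1 he) (by simp [h])
    have F : IsFan s c fr x (fun _ => y) 0 :=
      ⟨hp, hfr, by omega, fun _ _ => hxy, hes, by omega, by omega⟩
    exact F.isEdgeColorable (fun _ he' => G.not_isDiag_of_mem_edgeSet (G.mem_edgeFinset.1 (hs he')))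
      hc hfrN

lemma isEdgeColorable_of_subset_edgeFinset [Fintype V] [DecidableEq V] (G : SimpleGraph V)
    [DecidableRel G.Adj] {s : Finset (Sym2 V)} (hs : s ⊆ G.edgeFinset) :
    IsEdgeColorable s (G.maxDegree + 1) := by
  induction s using Finset.induction_on with
  | empty => exact ⟨fun _ => 0, by simp [IsProperOn], by simp⟩
  | insert e s hes ih =>
    exact isEdgeColorable_insert G (insert_subset_iff.1 hs).2 (ih (insert_subset_iff.1 hs).2)
      (insert_subset_iff.1 hs).1 hes

end Vizing

theorem exists_proper_edge_coloring_maxDegree_succ_general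
    {V : Type*} [Fintype V] (G : SimpleGraph V) [DecidableRel G.Adj] :
    ∃ c : Sym2 V → ℕ,
      (∀ e ∈ G.edgeSet, c e < G.maxDegree + 1) ∧
      (∀ e ∈ G.edgeSet, ∀ e' ∈ G.edgeSet,
        e ≠ e' → (∃ v, v ∈ e ∧ v ∈ e') → c e ≠ c e') := by
  classical
  obtain ⟨c, hp, hc⟩ := Vizing.isEdgeColorable_of_subset_edgeFinset G subset_rfl
  exact ⟨c, fun e he => hc e (G.mem_edgeFinset.2 he),
    fun e he e' he' => hp (G.mem_edgeFinset.2 he) (G.mem_edgeFinset.2 he')⟩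

/-- Vizing's theorem: every finite simple graph has a proper edge coloring
using at most `Δ(G) + 1` colors. -/
theorem exists_proper_edge_coloring_maxDegree_succ
    {V : Type*} [Fintype V] [DecidableEq V] (G : SimpleGraph V) [DecidableRel G.Adj] :
    ∃ c : Sym2 V → ℕ,
      (∀ e ∈ G.edgeSet, c e < G.maxDegree + 1) ∧
      (∀ e ∈ G.edgeSet, ∀ e' ∈ G.edgeSet,
        e ≠ e' → (∃ v, v ∈ e ∧ v ∈ e') → c e ≠ c e') :=
  exists_proper_edge_coloring_maxDegree_succ_general G
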